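/- arXiv:2212.00918 — 3 statements merged into one kernel-verified Lean document; each statement's English description precedes it below -/
import Mathlib

section
/- Let a and b be positive integers with gcd(a, b) > 1, and let r be a positive rational number. If r = φ(m^a)/φ(n^b) and r = φ(m'^a)/φ(n'^b) are both proper representations of r (with m, n, m', n' positive integers), then m = m' and n = n'. -/
/-!
Cross-multiplying gives `φ(m^a) φ(n'^b) = φ(m'^a) φ(n^b)`. Euler's product formula yields
`v_p(φ(N^k)) + [p ∣ N] = k v_p(N) + ∑_{q ∣ N prime} v_p(q - 1)`, and only primes `q > p` enter
the sum. A descending induction over the primes therefore shows that at every prime `p`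
`a v_p(m) + b v_p(n') + [p ∣ m'] + [p ∣ n] = a v_p(m') + b v_p(n) + [p ∣ m] + [p ∣ n']`, and also
that the valuation parts agree separately: their difference is a multiple of `gcd(a, b) ≥ 2` of
size at most `2`, and size exactly `2` forces one side to vanish and the other to be `≥ a + b`.

If `m ∤ m'`, then `m₁ = gcd(m, m')`, `n₁ = gcd(n, n')`, `d₁ = m / m₁`, `d₂ = n / n₁` show that
`(m, n)` is not proper: the valuation identity gives `d₁^a = d₂^b`, and the indicator identity
gives the condition on the primes of `d₁ d₂`. By symmetry `m = m'`, and then `n = n'`.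
-/

/-- A representation `r = φ(m^a)/φ(n^b)` is *proper* if there are no positive
integers `d₁ > 1`, `d₂`, `m₁`, `n₁` with `m = m₁·d₁`, `n = n₁·d₂`, `d₁^a = d₂^b`,
such that every prime `p ∣ d₁·d₂` satisfies `p ∣ gcd(m₁, n₁)` or
`gcd(p, m₁·n₁) = 1`. -/
def IsProperRep (a b m n : ℕ) : Prop :=
  ¬ ∃ d₁ d₂ m₁ n₁ : ℕ,
      1 < d₁ ∧ 0 < d₂ ∧ 0 < m₁ ∧ 0 < n₁ ∧
      m = m₁ * d₁ ∧ n = n₁ * d₂ ∧ d₁ ^ a = d₂ ^ b ∧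
      ∀ p : ℕ, p.Prime → p ∣ d₁ * d₂ →
        p ∣ Nat.gcd m₁ n₁ ∨ Nat.Coprime p (m₁ * n₁)

open Nat

def countPrimeFactorOf (q m n : ℕ) : ℕ :=
  (if q ∈ m.primeFactors then 1 else 0) + (if q ∈ n.primeFactors then 1 else 0)

lemma Nat.ite_mem_primeFactors_eq_min (N p : ℕ) :
    (if p ∈ N.primeFactors then 1 else 0) = min (N.factorization p) 1 := by
  simp only [← Nat.support_factorization, Finsupp.mem_support_iff]
  split_ifs <;> omega

lemma Nat.factorization_prod_primeFactors_apply (n p : ℕ) :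
    (∏ q ∈ n.primeFactors, q).factorization p = if p ∈ n.primeFactors then 1 else 0 := by
  rw [Nat.factorization_prod fun q hq => (Nat.prime_of_mem_primeFactors hq).ne_zero,
    Finset.sum_apply', ← Finset.sum_ite_eq' n.primeFactors p (fun _ => 1)]
  refine Finset.sum_congr rfl fun q hq => ?_
  rw [(Nat.prime_of_mem_primeFactors hq).factorization, Finsupp.single_apply]

lemma Nat.factorization_totient_pow_add (N k p : ℕ) (hN : N ≠ 0) (hk : k ≠ 0) :
    (φ (N ^ k)).factorization p + (if p ∈ N.primeFactors then 1 else 0) =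
      k * N.factorization p + ∑ q ∈ N.primeFactors, (q - 1).factorization p := by
  have h := congrArg (·.factorization p) (Nat.totient_mul_prod_primeFactors (N ^ k))
  have hsub : ∀ q ∈ N.primeFactors, q - 1 ≠ 0 := fun q hq =>
    Nat.sub_ne_zero_of_lt (Nat.prime_of_mem_primeFactors hq).one_lt
  simp only [Nat.primeFactors_pow N hk] at h
  rwa [Nat.factorization_mul (Nat.totient_eq_zero.not.2 (pow_ne_zero k hN))
      (Finset.prod_ne_zero_iff.2 fun q hq => (Nat.prime_of_mem_primeFactors hq).ne_zero),
    Nat.factorization_mul (pow_ne_zero k hN) (Finset.prod_ne_zero_iff.2 hsub),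
    Nat.factorization_prod hsub, Finsupp.add_apply, Finsupp.add_apply, Finset.sum_apply',
    Nat.factorization_prod_primeFactors_apply, Nat.factorization_pow, Finsupp.smul_apply,
    smul_eq_mul] at h

lemma Nat.factorization_div_gcd_apply {m m' : ℕ} (hm : m ≠ 0) (hm' : m' ≠ 0) (p : ℕ) :
    (m / m.gcd m').factorization p = m.factorization p - m'.factorization p := by
  rw [Nat.factorization_div (Nat.gcd_dvd_left m m'), Nat.factorization_gcd hm hm']
  simp only [Finsupp.tsub_apply, Finsupp.inf_apply]
  omega

lemma Finset.sum_add_sum_eq_of_ite_add_eq {ι M : Type*} [DecidableEq ι] [AddCommMonoid M]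
    (A B C D : Finset ι) (f : ι → M)
    (h : ∀ i, f i ≠ 0 → (if i ∈ A then 1 else 0) + (if i ∈ B then 1 else 0) =
      (if i ∈ C then 1 else 0) + (if i ∈ D then (1 : ℕ) else 0)) :
    ∑ i ∈ A, f i + ∑ i ∈ B, f i = ∑ i ∈ C, f i + ∑ i ∈ D, f i := by
  set T := A ∪ B ∪ C ∪ D
  have hT : ∀ X ⊆ T, ∑ i ∈ X, f i = ∑ i ∈ T, (if i ∈ X then 1 else 0 : ℕ) • f i := by
    intro X hX
    simp_rw [ite_smul, one_smul, zero_smul]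
    rw [Finset.sum_ite_mem, Finset.inter_eq_right.2 hX]
  rw [hT A (by intro; simp +contextual [T]), hT B (by intro; simp +contextual [T]),
    hT C (by intro; simp +contextual [T]), hT D (by intro; simp +contextual [T]),
    ← Finset.sum_add_distrib, ← Finset.sum_add_distrib]
  refine Finset.sum_congr rfl fun i _ => ?_
  by_cases hf : f i = 0
  · simp [hf]
  · rw [← add_smul, ← add_smul, h i hf]

lemma add_eq_add_of_add_min_one_eq {a b : ℕ} (ha : 0 < a) (hb : 0 < b) (hab : 1 < a.gcd b)
    {x y x' y' : ℕ}
    (h : a * x + b * y' + min x' 1 + min y 1 = a * x' + b * y + min x 1 + min y' 1) :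
    a * x + b * y' = a * x' + b * y := by
  wlog hle : a * x + b * y' ≤ a * x' + b * y generalizing x y x' y'
  · exact (this h.symm (by omega)).symm
  refine hle.eq_or_lt.resolve_right fun hlt => ?_
  have hmul : ∀ u v, a.gcd b ∣ a * u + b * v := fun u v =>
    dvd_add ((Nat.gcd_dvd_left a b).mul_right u) ((Nat.gcd_dvd_right a b).mul_right v)
  have hgap := Nat.le_of_dvd (by omega) (Nat.dvd_sub (hmul x' y) (hmul x y'))
  -- a gap of `2` between the two sides pins down all four `min` terms
  have hx : x = 0 := by omega
  have hy' : y' = 0 := by omega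
  have hax' : a ≤ a * x' := Nat.le_mul_of_pos_right a (by omega)
  have hby : b ≤ b * y := Nat.le_mul_of_pos_right b (by omega)
  have hga : a.gcd b ≤ a := Nat.le_of_dvd ha (Nat.gcd_dvd_left a b)
  subst hx hy'
  omega

section

variable {a b m n m' n' : ℕ}

theorem factorization_balance_of_totient_eq_of_gt (ha : 0 < a) (hb : 0 < b)
    (hab : 1 < a.gcd b) (hm : m ≠ 0) (hn : n ≠ 0) (hm' : m' ≠ 0) (hn' : n' ≠ 0)
    (H : φ (m ^ a) * φ (n' ^ b) = φ (m' ^ a) * φ (n ^ b)) (p : ℕ)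
    (hgt : ∀ q, p < q → countPrimeFactorOf q m n' = countPrimeFactorOf q m' n) :
    a * m.factorization p + b * n'.factorization p =
        a * m'.factorization p + b * n.factorization p ∧
      countPrimeFactorOf p m n' = countPrimeFactorOf p m' n := by
  have hval := congrArg (·.factorization p) H
  have hφ : ∀ {N} k, N ≠ 0 → φ (N ^ k) ≠ 0 := fun k hN =>
    Nat.totient_eq_zero.not.2 (pow_ne_zero k hN)
  rw [Nat.factorization_mul (hφ a hm) (hφ b hn'), Nat.factorization_mul (hφ a hm') (hφ b hn),
    Finsupp.add_apply, Finsupp.add_apply] at hval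
  have hsum := Finset.sum_add_sum_eq_of_ite_add_eq m.primeFactors n'.primeFactors
    m'.primeFactors n.primeFactors (fun q => (q - 1).factorization p) fun q hq =>
      hgt q <| by
        have hq1 : q - 1 ≠ 0 := fun h => hq (by simp [h])
        have := Nat.le_of_dvd (Nat.pos_of_ne_zero hq1) (Nat.dvd_of_factorization_pos hq)
        omega
  have hvm := Nat.factorization_totient_pow_add m a p hm ha.ne'
  have hvn' := Nat.factorization_totient_pow_add n' b p hn' hb.ne'
  have hvm' := Nat.factorization_totient_pow_add m' a p hm' ha.ne'
  have hvn := Nat.factorization_totient_pow_add n b p hn hb.ne'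
  have hbal : a * m.factorization p + b * n'.factorization p + min (m'.factorization p) 1 +
      min (n.factorization p) 1 = a * m'.factorization p + b * n.factorization p +
      min (m.factorization p) 1 + min (n'.factorization p) 1 := by
    simp only [← Nat.ite_mem_primeFactors_eq_min]
    omega
  have hsplit := add_eq_add_of_add_min_one_eq ha hb hab hbal
  simp only [countPrimeFactorOf, Nat.ite_mem_primeFactors_eq_min]
  omega

theorem factorization_balance_of_totient_eq (ha : 0 < a) (hb : 0 < b) (hab : 1 < a.gcd b)
    (hm : m ≠ 0) (hn : n ≠ 0) (hm' : m' ≠ 0) (hn' : n' ≠ 0)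
    (H : φ (m ^ a) * φ (n' ^ b) = φ (m' ^ a) * φ (n ^ b)) (p : ℕ) :
    a * m.factorization p + b * n'.factorization p =
        a * m'.factorization p + b * n.factorization p ∧
      countPrimeFactorOf p m n' = countPrimeFactorOf p m' n := by
  have hcount : ∀ k q, m + n + m' + n' < q + k →
      countPrimeFactorOf q m n' = countPrimeFactorOf q m' n := by
    intro k
    induction k with
    | zero =>
      intro q hq
      have hnot : ∀ N ≤ m + n + m' + n', q ∉ N.primeFactors := fun N hN h =>
        absurd (Nat.le_of_mem_primeFactors h) (by omega)
      simp only [countPrimeFactorOf, if_neg (hnot m (by omega)), if_neg (hnot n (by omega)),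
        if_neg (hnot m' (by omega)), if_neg (hnot n' (by omega))]
    | succ k ih =>
      intro q hq
      exact (factorization_balance_of_totient_eq_of_gt ha hb hab hm hn hm' hn' H q
        fun q' hq' => ih q' (by omega)).2
  exact factorization_balance_of_totient_eq_of_gt ha hb hab hm hn hm' hn' H p
    fun q _ => hcount _ q (Nat.lt_add_left q (Nat.lt_succ_self _))

theorem dvd_of_isProperRep (ha : 0 < a) (hb : 0 < b) (hm : m ≠ 0) (hn : n ≠ 0)
    (hm' : m' ≠ 0) (hn' : n' ≠ 0) (hproper : IsProperRep a b m n)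
    (hval : ∀ p, a * m.factorization p + b * n'.factorization p =
      a * m'.factorization p + b * n.factorization p)
    (hcount : ∀ p, countPrimeFactorOf p m n' = countPrimeFactorOf p m' n) :
    m ∣ m' := by
  by_contra hdvd
  set d₁ := m / m.gcd m'
  set d₂ := n / n.gcd n'
  have hm₁ : m = m.gcd m' * d₁ := (Nat.mul_div_cancel' (Nat.gcd_dvd_left m m')).symm
  have hn₁ : n = n.gcd n' * d₂ := (Nat.mul_div_cancel' (Nat.gcd_dvd_left n n')).symm
  have hd₁ : d₁ ≠ 0 := right_ne_zero_of_mul (hm₁ ▸ hm)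
  have hd₂ : d₂ ≠ 0 := right_ne_zero_of_mul (hn₁ ▸ hn)
  have hd₁p := Nat.factorization_div_gcd_apply hm hm'
  have hd₂p := Nat.factorization_div_gcd_apply hn hn'
  have hsign : ∀ p, a * (m.factorization p - m'.factorization p) =
      b * (n.factorization p - n'.factorization p) := by
    intro p
    have := hval p
    rw [Nat.mul_sub, Nat.mul_sub]
    omega
  refine hproper ⟨d₁, d₂, m.gcd m', n.gcd n', ?_, Nat.pos_of_ne_zero hd₂,
    Nat.gcd_pos_of_pos_left _ (Nat.pos_of_ne_zero hm),
    Nat.gcd_pos_of_pos_left _ (Nat.pos_of_ne_zero hn), hm₁, hn₁, ?_, ?_⟩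
  · refine lt_of_le_of_ne (Nat.pos_of_ne_zero hd₁) fun h => hdvd ?_
    rw [hm₁, ← h, mul_one]
    exact Nat.gcd_dvd_right m m'
  · refine Nat.eq_of_factorization_eq (pow_ne_zero _ hd₁) (pow_ne_zero _ hd₂) fun p => ?_
    rw [Nat.factorization_pow, Nat.factorization_pow, Finsupp.smul_apply, Finsupp.smul_apply,
      smul_eq_mul, smul_eq_mul, hd₁p, hd₂p, hsign]
  intro p hp hpd
  have hsame : m.factorization p - m'.factorization p = 0 ↔
      n.factorization p - n'.factorization p = 0 := by
    rw [← mul_eq_zero_iff_left ha.ne', hsign p, mul_eq_zero_iff_left hb.ne']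
  have hm_gt : m'.factorization p < m.factorization p := by
    rcases (Nat.Prime.dvd_mul hp).1 hpd with h | h
    · exact Nat.sub_pos_iff_lt.1 (hd₁p p ▸ hp.factorization_pos_of_dvd hd₁ h)
    · have := hd₂p p ▸ hp.factorization_pos_of_dvd hd₂ h
      omega
  have hpm : p ∈ m.primeFactors :=
    Nat.support_factorization m ▸ Finsupp.mem_support_iff.2 (by omega)
  have hpn : p ∈ n.primeFactors :=
    Nat.support_factorization n ▸ Finsupp.mem_support_iff.2 (by omega)
  have hiff : p ∣ m' ↔ p ∣ n' := by
    have := hcount p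
    simp only [countPrimeFactorOf, if_pos hpm, if_pos hpn] at this
    rw [← (Nat.mem_primeFactors_of_ne_zero hm').trans (and_iff_right hp),
      ← (Nat.mem_primeFactors_of_ne_zero hn').trans (and_iff_right hp)]
    split_ifs at this <;> tauto
  by_cases hpm' : p ∣ m'
  · exact Or.inl (Nat.dvd_gcd (Nat.dvd_gcd (Nat.dvd_of_mem_primeFactors hpm) hpm')
      (Nat.dvd_gcd (Nat.dvd_of_mem_primeFactors hpn) (hiff.1 hpm')))
  · refine Or.inr (Nat.Coprime.mul_right ?_ ?_) <;> rw [hp.coprime_iff_not_dvd]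
    · exact fun h => hpm' (h.trans (Nat.gcd_dvd_right m m'))
    · exact fun h => hpm' (hiff.2 (h.trans (Nat.gcd_dvd_right n n')))

end

theorem stmt_10_general (a b : ℕ) (ha : 0 < a) (hb : 0 < b) (hab : 1 < Nat.gcd a b)
    (r : ℚ) (m n m' n' : ℕ)
    (hm : 0 < m) (hn : 0 < n) (hm' : 0 < m') (hn' : 0 < n')
    (hrep : r = (Nat.totient (m ^ a) : ℚ) / (Nat.totient (n ^ b) : ℚ))
    (hproper : IsProperRep a b m n)
    (hrep' : r = (Nat.totient (m' ^ a) : ℚ) / (Nat.totient (n' ^ b) : ℚ))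
    (hproper' : IsProperRep a b m' n') :
    m = m' ∧ n = n' := by
  have H : φ (m ^ a) * φ (n' ^ b) = φ (m' ^ a) * φ (n ^ b) := by
    have hφn : (φ (n ^ b) : ℚ) ≠ 0 := by exact_mod_cast (Nat.totient_pos.2 (pow_pos hn b)).ne'
    have hφn' : (φ (n' ^ b) : ℚ) ≠ 0 := by exact_mod_cast (Nat.totient_pos.2 (pow_pos hn' b)).ne'
    have h := hrep.symm.trans hrep'
    rw [div_eq_div_iff hφn hφn'] at h
    exact_mod_cast h
  have hbal := factorization_balance_of_totient_eq ha hb hab hm.ne' hn.ne' hm'.ne' hn'.ne' H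
  have hbal' :=
    factorization_balance_of_totient_eq ha hb hab hm'.ne' hn'.ne' hm.ne' hn.ne' H.symm
  have hmm' : m = m' := Nat.dvd_antisymm
    (dvd_of_isProperRep ha hb hm.ne' hn.ne' hm'.ne' hn'.ne' hproper (hbal · |>.1) (hbal · |>.2))
    (dvd_of_isProperRep ha hb hm'.ne' hn'.ne' hm.ne' hn.ne' hproper' (hbal' · |>.1)
      (hbal' · |>.2))
  refine ⟨hmm', Nat.eq_of_factorization_eq hn.ne' hn'.ne' fun p => ?_⟩
  have := (hbal p).1
  rw [hmm'] at this
  exact (Nat.eq_of_mul_eq_mul_left hb (by omega)).symm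

theorem stmt_10 (a b : ℕ) (ha : 0 < a) (hb : 0 < b) (hab : 1 < Nat.gcd a b)
    (r : ℚ) (hr : 0 < r) (m n m' n' : ℕ)
    (hm : 0 < m) (hn : 0 < n) (hm' : 0 < m') (hn' : 0 < n')
    (hrep : r = (Nat.totient (m ^ a) : ℚ) / (Nat.totient (n ^ b) : ℚ))
    (hproper : IsProperRep a b m n)
    (hrep' : r = (Nat.totient (m' ^ a) : ℚ) / (Nat.totient (n' ^ b) : ℚ))
    (hproper' : IsProperRep a b m' n') :
    m = m' ∧ n = n' :=
  stmt_10_general a b ha hb hab r m n m' n' hm hn hm' hn' hrep hproper hrep' hproper'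
end

section
/- Let a and b be positive integers with gcd(a, b) > 1, let r be a positive rational number, and let r = φ(m^a)/φ(n^b) be a proper representation of r with m, n positive integers. Then P(m·n) = P(r), i.e., the largest prime factor of m·n equals the largest prime occurring in the standard factorization of r (with the convention P(1) = 1). -/
/-- The largest prime factor of `n`, with the convention that it is `1`
when `n` has no prime factors (in particular `P(1) = 1`). -/
def maxPrimeFac (n : ℕ) : ℕ := WithBot.unbotD 1 n.primeFactors.max

/-- The largest prime occurring in the numerator or denominator of a rational
number written in lowest terms, with the convention `P(1) = 1`. -/
def maxPrimeFacQ (r : ℚ) : ℕ := maxPrimeFac (r.num.natAbs * r.den)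

/-!
Let `Q` be the largest prime factor of `m n`. Every prime factor of `φ(N)` is at most the
largest prime factor of `N`, so `P(r) ≤ Q`. Conversely, since no prime factor of `m^a` or `n^b`
exceeds `Q`, the exponent of `Q` drops by exactly one under `φ`: `v_Q(φ(m^a)) = a·v_Q(m) - 1`
and `v_Q(φ(n^b)) = b·v_Q(n) - 1` (truncated). If `Q` cancelled from `r`, these would agree, and
as `a, b ≥ 2` neither product equals `1`, so `a·v_Q(m) = b·v_Q(n)`. Then `d₁ = Q^{v_Q(m)}`,
`d₂ = Q^{v_Q(n)}` would witness that the representation is not proper.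
-/

lemma le_maxPrimeFac {p N : ℕ} (hp : p.Prime) (hN : N ≠ 0) (h : p ∣ N) :
    p ≤ maxPrimeFac N := by
  have hle := Finset.le_max (Nat.mem_primeFactors.mpr ⟨hp, h, hN⟩)
  unfold maxPrimeFac
  cases hx : N.primeFactors.max with
  | bot => simp [hx] at hle
  | coe k => simpa [hx] using hle

lemma maxPrimeFac_le {N K : ℕ} (hK : 1 ≤ K) (h : ∀ p ∈ N.primeFactors, p ≤ K) :
    maxPrimeFac N ≤ K := by
  unfold maxPrimeFac
  cases hx : N.primeFactors.max with
  | bot => simpa using hK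
  | coe k => simpa using h k (Finset.mem_of_max hx)

lemma one_le_maxPrimeFac (N : ℕ) : 1 ≤ maxPrimeFac N := by
  unfold maxPrimeFac
  cases hx : N.primeFactors.max with
  | bot => rfl
  | coe k => simpa using (Nat.prime_of_mem_primeFactors (Finset.mem_of_max hx)).one_le

lemma maxPrimeFac_mem_primeFactors {N : ℕ} (hN : 1 < N) :
    maxPrimeFac N ∈ N.primeFactors := by
  obtain ⟨k, hk⟩ := Finset.max_of_nonempty (Nat.nonempty_primeFactors.mpr hN)
  have heq : maxPrimeFac N = k := by unfold maxPrimeFac; rw [hk]; rfl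
  exact heq ▸ Finset.mem_of_max hk

namespace Nat

lemma exists_prime_dvd_le_of_dvd_totient {p N : ℕ} (hp : p.Prime) (hN : N ≠ 0)
    (h : p ∣ N.totient) : ∃ ℓ, ℓ.Prime ∧ ℓ ∣ N ∧ p ≤ ℓ := by
  rw [totient_eq_prod_factorization hN, Prime.dvd_finsuppProd_iff hp.prime] at h
  obtain ⟨ℓ, hℓN, hpdvd⟩ := h
  rw [support_factorization] at hℓN
  have hℓ : ℓ.Prime := prime_of_mem_primeFactors hℓN
  refine ⟨ℓ, hℓ, dvd_of_mem_primeFactors hℓN, ?_⟩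
  rcases hp.dvd_mul.mp hpdvd with hpow | hpred
  · exact ((prime_dvd_prime_iff_eq hp hℓ).mp (hp.dvd_of_dvd_pow hpow)).le
  · exact (le_of_dvd (by have := hℓ.two_le; omega) hpred).trans (sub_le ℓ 1)

lemma not_dvd_totient_of_forall_le {q N : ℕ} (hq : q.Prime) (hN : N ≠ 0) (hqN : ¬ q ∣ N)
    (hmax : ∀ ℓ, ℓ.Prime → ℓ ∣ N → ℓ ≤ q) : ¬ q ∣ N.totient := by
  intro h
  obtain ⟨ℓ, hℓ, hℓN, hqℓ⟩ := exists_prime_dvd_le_of_dvd_totient hq hN h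
  exact hqN (le_antisymm (hmax ℓ hℓ hℓN) hqℓ ▸ hℓN)

/-- The truncated subtraction also covers `q ∤ N`, where both sides vanish. -/
lemma factorization_totient_of_forall_le {q N : ℕ} (hq : q.Prime) (hN : N ≠ 0)
    (hmax : ∀ ℓ, ℓ.Prime → ℓ ∣ N → ℓ ≤ q) :
    N.totient.factorization q = N.factorization q - 1 := by
  by_cases hqN : q ∣ N
  swap
  · rw [factorization_eq_zero_of_not_dvd hqN,
      factorization_eq_zero_of_not_dvd (not_dvd_totient_of_forall_le hq hN hqN hmax)]
  have hq2 := hq.two_le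
  set α := N.factorization q
  set N' := N / q ^ α
  have hα : 0 < α := hq.factorization_pos_of_dvd hN hqN
  have hsplit : q ^ α * N' = N := ordProj_mul_ordCompl_eq_self N q
  have hN' : N' ≠ 0 := (ordCompl_pos q hN).ne'
  have hq1 : ¬ q ∣ q - 1 := not_dvd_of_pos_of_lt (by omega) (by omega)
  have htotN' : ¬ q ∣ N'.totient :=
    not_dvd_totient_of_forall_le hq hN' (not_dvd_ordCompl hq hN)
      fun ℓ hℓ hℓN' => hmax ℓ hℓ (hℓN'.trans (Dvd.intro_left _ hsplit))
  have htot : N.totient = q ^ (α - 1) * (q - 1) * N'.totient := by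
    rw [← hsplit, totient_mul ((coprime_ordCompl hq hN).pow_left α),
      totient_prime_pow hq hα]
  rw [htot, factorization_mul (by simp [hq.ne_zero]; omega) (totient_pos.mpr
      (pos_of_ne_zero hN')).ne', factorization_mul (pow_ne_zero _ hq.ne_zero) (by omega)]
  simp [hq.factorization_pow, factorization_eq_zero_of_not_dvd hq1,
    factorization_eq_zero_of_not_dvd htotN']

lemma factorization_totient_pow_of_forall_le {q m : ℕ} (a : ℕ) (hq : q.Prime) (hm : m ≠ 0)
    (hmax : ∀ ℓ, ℓ.Prime → ℓ ∣ m → ℓ ≤ q) :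
    (m ^ a).totient.factorization q = a * m.factorization q - 1 := by
  rw [factorization_totient_of_forall_le hq (pow_ne_zero a hm)
    fun ℓ hℓ hd => hmax ℓ hℓ (hℓ.dvd_of_dvd_pow hd), factorization_pow]
  rfl

end Nat

namespace Rat

variable {r : ℚ} {A B : ℕ}

lemma natAbs_num_mul_eq_of_eq_div (hB : B ≠ 0) (h : r = A / B) :
    r.num.natAbs * B = A * r.den := by
  have hnum : (r.num.natAbs : ℤ) = r.num :=
    Int.natAbs_of_nonneg (num_nonneg.mpr (h ▸ by positivity))
  have hq : (r.num : ℚ) * B = A * r.den := by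
    rw [← num_div_den r, div_eq_div_iff (by positivity) (by exact_mod_cast hB)] at h
    exact h
  rw [← hnum] at hq
  exact_mod_cast hq

lemma natAbs_num_mul_den_dvd_of_eq_div (hB : B ≠ 0) (h : r = A / B) :
    r.num.natAbs * r.den ∣ A * B := by
  have hcross := natAbs_num_mul_eq_of_eq_div hB h
  refine mul_dvd_mul (r.reduced.dvd_of_dvd_mul_right ⟨B, ?_⟩)
    (r.reduced.symm.dvd_of_dvd_mul_left ⟨A, ?_⟩) <;> linarith

lemma factorization_eq_of_eq_div {q : ℕ} (hA : A ≠ 0) (hB : B ≠ 0) (h : r = A / B)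
    (hq : ¬ q ∣ r.num.natAbs * r.den) : A.factorization q = B.factorization q := by
  have hnum : r.num.natAbs ≠ 0 := by simp [h, hA, hB]
  have hcross := congrArg (fun x => x.factorization q) (natAbs_num_mul_eq_of_eq_div hB h)
  simp only [Nat.factorization_mul hnum hB, Nat.factorization_mul hA r.den_nz,
    Finsupp.add_apply] at hcross
  rw [Nat.factorization_eq_zero_of_not_dvd fun h => hq (h.mul_right _),
    Nat.factorization_eq_zero_of_not_dvd fun h => hq (h.mul_left _)] at hcross
  omega

end Rat

lemma maxPrimeFacQ_totient_div_le {M N : ℕ} (hM : M ≠ 0) (hN : N ≠ 0) :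
    maxPrimeFacQ (M.totient / N.totient : ℚ) ≤ maxPrimeFac (M * N) := by
  refine maxPrimeFac_le (one_le_maxPrimeFac _) fun p hp => ?_
  have hpp := Nat.prime_of_mem_primeFactors hp
  have hMN : M * N ≠ 0 := mul_ne_zero hM hN
  rcases hpp.dvd_mul.mp ((Nat.dvd_of_mem_primeFactors hp).trans
    (Rat.natAbs_num_mul_den_dvd_of_eq_div (Nat.totient_pos.mpr (Nat.pos_of_ne_zero hN)).ne'
      rfl)) with hpM | hpN
  · obtain ⟨ℓ, hℓ, hℓM, hpℓ⟩ := Nat.exists_prime_dvd_le_of_dvd_totient hpp hM hpM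
    exact hpℓ.trans (le_maxPrimeFac hℓ hMN (hℓM.mul_right N))
  · obtain ⟨ℓ, hℓ, hℓN, hpℓ⟩ := Nat.exists_prime_dvd_le_of_dvd_totient hpp hN hpN
    exact hpℓ.trans (le_maxPrimeFac hℓ hMN (hℓN.mul_left M))

lemma IsProperRep.factorization_eq_zero {a b m n q : ℕ} (h : IsProperRep a b m n)
    (hq : q.Prime) (hm : m ≠ 0) (hn : n ≠ 0)
    (heq : a * m.factorization q = b * n.factorization q) : m.factorization q = 0 := by
  by_contra hα
  refine h ⟨q ^ m.factorization q, q ^ n.factorization q, m / q ^ m.factorization q,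
    n / q ^ n.factorization q, Nat.one_lt_pow hα hq.one_lt, pow_pos hq.pos _,
    Nat.ordCompl_pos q hm, Nat.ordCompl_pos q hn,
    by rw [mul_comm, Nat.ordProj_mul_ordCompl_eq_self],
    by rw [mul_comm, Nat.ordProj_mul_ordCompl_eq_self],
    by rw [← pow_mul, ← pow_mul, mul_comm, heq, mul_comm], fun p hp hpd => Or.inr ?_⟩
  rw [← pow_add] at hpd
  obtain rfl := (Nat.prime_dvd_prime_iff_eq hp hq).mp (hp.dvd_of_dvd_pow hpd)
  exact (Nat.coprime_ordCompl hp hm).mul_right (Nat.coprime_ordCompl hp hn)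

lemma IsProperRep.factorization_totient_pow_ne {a b m n q : ℕ} (h : IsProperRep a b m n)
    (ha : 2 ≤ a) (hb : 2 ≤ b) (hq : q.Prime) (hm : m ≠ 0) (hn : n ≠ 0) (hqmn : q ∣ m * n)
    (hmax : ∀ ℓ, ℓ.Prime → ℓ ∣ m * n → ℓ ≤ q) :
    (m ^ a).totient.factorization q ≠ (n ^ b).totient.factorization q := by
  intro hv
  rw [Nat.factorization_totient_pow_of_forall_le a hq hm
      fun ℓ hℓ hd => hmax ℓ hℓ (hd.mul_right n),
    Nat.factorization_totient_pow_of_forall_le b hq hn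
      fun ℓ hℓ hd => hmax ℓ hℓ (hd.mul_left m)] at hv
  have hne_one : ∀ {c k : ℕ}, 2 ≤ c → c * k ≠ 1 := fun hc h => by
    have := (mul_eq_one.mp h).1; omega
  have heq : a * m.factorization q = b * n.factorization q := by
    have := hne_one (k := m.factorization q) ha
    have := hne_one (k := n.factorization q) hb
    omega
  have hα := h.factorization_eq_zero hq hm hn heq
  have hβ : n.factorization q = 0 := by simp [hα] at heq; omega
  exact (hq.factorization_pos_of_dvd (mul_ne_zero hm hn) hqmn).ne'
    (by simp [Nat.factorization_mul hm hn, hα, hβ])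

theorem stmt_11_general (a b : ℕ) (ha : 0 < a) (hb : 0 < b) (hab : 1 < Nat.gcd a b)
    (r : ℚ) (m n : ℕ) (hm : 0 < m) (hn : 0 < n)
    (hrep : r = (Nat.totient (m ^ a) : ℚ) / (Nat.totient (n ^ b) : ℚ))
    (hproper : IsProperRep a b m n) :
    maxPrimeFac (m * n) = maxPrimeFacQ r := by
  have ha2 : 2 ≤ a := hab.trans_le (Nat.le_of_dvd ha (Nat.gcd_dvd_left a b))
  have hb2 : 2 ≤ b := hab.trans_le (Nat.le_of_dvd hb (Nat.gcd_dvd_right a b))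
  have hA : (m ^ a).totient ≠ 0 := (Nat.totient_pos.mpr (by positivity)).ne'
  have hB : (n ^ b).totient ≠ 0 := (Nat.totient_pos.mpr (by positivity)).ne'
  apply le_antisymm
  · rcases Nat.lt_or_ge 1 (m * n) with hmn | hmn
    · have hQ := Nat.dvd_of_mem_primeFactors (maxPrimeFac_mem_primeFactors hmn)
      have hQp := Nat.prime_of_mem_primeFactors (maxPrimeFac_mem_primeFactors hmn)
      refine le_maxPrimeFac hQp (by simp [hrep, hA, hB]) (by_contra fun hQr => ?_)
      exact hproper.factorization_totient_pow_ne ha2 hb2 hQp hm.ne' hn.ne' hQ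
        (fun ℓ hℓ hℓmn => le_maxPrimeFac hℓ (by positivity) hℓmn)
        (Rat.factorization_eq_of_eq_div hA hB hrep hQr)
    · rw [(by nlinarith : m * n = 1)]
      exact maxPrimeFac_le (one_le_maxPrimeFac _) (by simp)
  · calc maxPrimeFacQ r ≤ maxPrimeFac (m ^ a * n ^ b) :=
          hrep ▸ maxPrimeFacQ_totient_div_le (by positivity) (by positivity)
      _ = maxPrimeFac (m * n) := by
          simp only [maxPrimeFac, Nat.primeFactors_mul hm.ne' hn.ne',
            Nat.primeFactors_mul (pow_ne_zero a hm.ne') (pow_ne_zero b hn.ne'),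
            Nat.primeFactors_pow _ ha.ne', Nat.primeFactors_pow _ hb.ne']

theorem stmt_11 (a b : ℕ) (ha : 0 < a) (hb : 0 < b) (hab : 1 < Nat.gcd a b)
    (r : ℚ) (hr : 0 < r) (m n : ℕ) (hm : 0 < m) (hn : 0 < n)
    (hrep : r = (Nat.totient (m ^ a) : ℚ) / (Nat.totient (n ^ b) : ℚ))
    (hproper : IsProperRep a b m n) :
    maxPrimeFac (m * n) = maxPrimeFacQ r :=
  stmt_11_general a b ha hb hab r m n hm hn hrep hproper
end

section
/- Let a and b be positive integers with gcd(a, b) > 1 and let m, n be positive integers such that 1 = φ(m^a)/φ(n^b) is a proper representation of 1. Then m = 1 and n = 1. -/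
open Nat

namespace Nat

theorem not_dvd_totient_of_forall_primeFactors_le {p N : ℕ} (hp : p.Prime) (hN : N ≠ 0)
    (hpN : ¬ p ∣ N) (hle : ∀ q ∈ N.primeFactors, q ≤ p) : ¬ p ∣ φ N := by
  rw [totient_eq_prod_factorization hN, Finsupp.prod, support_factorization]
  intro h
  obtain ⟨q, hq, hdvd⟩ := (hp.prime.dvd_finsetProd_iff _).mp h
  have hq_prime := prime_of_mem_primeFactors hq
  rcases hp.dvd_mul.mp hdvd with hpow | hpred
  · have hpq : p = q := (prime_dvd_prime_iff_eq hp hq_prime).mp (hp.dvd_of_dvd_pow hpow)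
    exact hpN (hpq ▸ dvd_of_mem_primeFactors hq)
  · have := hq_prime.two_le
    have := le_of_dvd (by omega) hpred
    have := hle q hq
    omega

theorem factorization_totient_of_forall_primeFactors_le {p M : ℕ} (hp : p.Prime) (hM : M ≠ 0)
    (hpM : p ∣ M) (hle : ∀ q ∈ M.primeFactors, q ≤ p) :
    (φ M).factorization p = M.factorization p - 1 := by
  set k := M.factorization p
  set c := ordCompl[p] M
  have hk : 0 < k := hp.factorization_pos_of_dvd hM hpM
  have hc : c ≠ 0 := (ordCompl_pos p hM).ne'
  have htot : φ M = p ^ (k - 1) * ((p - 1) * φ c) := by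
    rw [← ordProj_mul_ordCompl_eq_self M p,
      totient_mul ((coprime_ordCompl hp hM).pow_left k), totient_prime_pow hp hk, mul_assoc]
  have hcoprime : ¬ p ∣ (p - 1) * φ c := by
    rw [hp.dvd_mul, not_or]
    refine ⟨fun h ↦ ?_, not_dvd_totient_of_forall_primeFactors_le hp hc (not_dvd_ordCompl hp hM)
      fun q hq ↦ hle q (primeFactors_mono (ordCompl_dvd M p) hM hq)⟩
    have := hp.two_le
    have := le_of_dvd (by omega) h
    omega
  have hne : (p - 1) * φ c ≠ 0 := fun h0 ↦ hcoprime (h0 ▸ dvd_zero p)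
  rw [htot, factorization_mul (pow_ne_zero _ hp.ne_zero) hne, Finsupp.add_apply,
    hp.factorization_pow, Finsupp.single_eq_same, factorization_eq_zero_of_not_dvd hcoprime,
    add_zero]

theorem factorization_eq_of_totient_eq {p X Y : ℕ} (hp : p.Prime) (hX : X ≠ 0) (hY : Y ≠ 0)
    (hXle : ∀ q ∈ X.primeFactors, q ≤ p) (hYle : ∀ q ∈ Y.primeFactors, q ≤ p)
    (hpX : p ^ 2 ∣ X) (h : φ X = φ Y) : X.factorization p = Y.factorization p := by
  have hX2 : 2 ≤ X.factorization p := (hp.pow_dvd_iff_le_factorization hX).mp hpX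
  have hvX := factorization_totient_of_forall_primeFactors_le hp hX
    ((dvd_pow_self p two_ne_zero).trans hpX) hXle
  have hpY : p ∣ Y := by
    by_contra hpY
    refine not_dvd_totient_of_forall_primeFactors_le hp hY hpY hYle ?_
    rw [← h, hp.dvd_iff_one_le_factorization (totient_pos.mpr (pos_of_ne_zero hX)).ne', hvX]
    omega
  have hvY := factorization_totient_of_forall_primeFactors_le hp hY hpY hYle
  have hY1 := hp.factorization_pos_of_dvd hY hpY
  rw [h, hvY] at hvX
  omega

theorem exists_prime_forall_primeFactors_le {N : ℕ} (hN : N.primeFactors.Nonempty) :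
    ∃ p, p.Prime ∧ p ∣ N ∧ ∀ q ∈ N.primeFactors, q ≤ p := by
  have hmem := N.primeFactors.max'_mem hN
  exact ⟨_, prime_of_mem_primeFactors hmem, dvd_of_mem_primeFactors hmem,
    fun q hq ↦ N.primeFactors.le_max' q hq⟩

end Nat

theorem not_isProperRep_of_factorization_eq {a b m n p : ℕ} (hp : p.Prime) (hm : m ≠ 0)
    (hn : n ≠ 0) (hpm : p ∣ m) (h : a * m.factorization p = b * n.factorization p) :
    ¬ IsProperRep a b m n := by
  refine not_not.mpr ⟨p ^ m.factorization p, p ^ n.factorization p, ordCompl[p] m,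
    ordCompl[p] n, one_lt_pow ?_ hp.one_lt, pow_pos hp.pos _, ordCompl_pos p hm,
    ordCompl_pos p hn, by rw [mul_comm, ordProj_mul_ordCompl_eq_self],
    by rw [mul_comm, ordProj_mul_ordCompl_eq_self], ?_, fun q hq hqd ↦ ?_⟩
  · exact (hp.factorization_pos_of_dvd hm hpm).ne'
  · rw [← pow_mul, ← pow_mul, mul_comm _ a, mul_comm _ b, h]
  · rw [← pow_add] at hqd
    rw [(prime_dvd_prime_iff_eq hq hp).mp (hq.dvd_of_dvd_pow hqd)]
    exact Or.inr ((coprime_ordCompl hp hm).mul_right (coprime_ordCompl hp hn))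

theorem stmt_12 (a b : ℕ) (ha : 0 < a) (hb : 0 < b) (hab : 1 < Nat.gcd a b)
    (m n : ℕ) (hm : 0 < m) (hn : 0 < n)
    (hrep : (1 : ℚ) = (Nat.totient (m ^ a) : ℚ) / (Nat.totient (n ^ b) : ℚ))
    (hproper : IsProperRep a b m n) :
    m = 1 ∧ n = 1 := by
  have ha2 : 2 ≤ a := hab.trans_le (le_of_dvd ha (Nat.gcd_dvd_left a b))
  have hb2 : 2 ≤ b := hab.trans_le (le_of_dvd hb (Nat.gcd_dvd_right a b))
  have htot : φ (m ^ a) = φ (n ^ b) := by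
    have hden : (φ (n ^ b) : ℚ) ≠ 0 := by exact_mod_cast (totient_pos.mpr (pow_pos hn b)).ne'
    exact_mod_cast ((eq_div_iff hden).mp hrep).symm.trans (one_mul _)
  rw [← mul_eq_one]
  by_contra hmn
  obtain ⟨p, hp, hpmn, hle⟩ := exists_prime_forall_primeFactors_le (N := m * n)
    (nonempty_primeFactors.mpr (by have := Nat.mul_pos hm hn; omega))
  rw [primeFactors_mul hm.ne' hn.ne'] at hle
  have hmle : ∀ q ∈ (m ^ a).primeFactors, q ≤ p := by
    rw [primeFactors_pow m ha.ne']; exact fun q hq ↦ hle q (Finset.mem_union_left _ hq)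
  have hnle : ∀ q ∈ (n ^ b).primeFactors, q ≤ p := by
    rw [primeFactors_pow n hb.ne']; exact fun q hq ↦ hle q (Finset.mem_union_right _ hq)
  have hsq {x e : ℕ} (he : 2 ≤ e) (hpx : p ∣ x) : p ^ 2 ∣ x ^ e :=
    (pow_dvd_pow p he).trans (pow_dvd_pow_of_dvd hpx e)
  have hv : a * m.factorization p = b * n.factorization p := by
    simp only [← smul_eq_mul, ← Finsupp.smul_apply, ← factorization_pow]
    rcases hp.dvd_mul.mp hpmn with hpm | hpn
    · exact factorization_eq_of_totient_eq hp (pow_pos hm a).ne' (pow_pos hn b).ne' hmle hnle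
        (hsq ha2 hpm) htot
    · exact (factorization_eq_of_totient_eq hp (pow_pos hn b).ne' (pow_pos hm a).ne' hnle hmle
        (hsq hb2 hpn) htot.symm).symm
  have hpm : p ∣ m := by
    by_contra hpm
    rw [factorization_eq_zero_of_not_dvd hpm, mul_zero, eq_comm, mul_eq_zero] at hv
    have hpn := (hp.dvd_mul.mp hpmn).resolve_left hpm
    exact hv.elim hb.ne' (hp.factorization_pos_of_dvd hn.ne' hpn).ne'
  exact not_isProperRep_of_factorization_eq hp hm.ne' hn.ne' hpm hv hproper
end
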